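/- Let 𝔫 be a finite-dimensional real nilpotent Lie algebra and L : 𝔫 → 𝔫 an expanding Lie algebra automorphism admitting a real eigenbasis Σ, with simple sorted spectrum. Fix a norm ‖·‖ on 𝔫 and let φ denote the associated Guivarc'h length with respect to the L-grading. Let v ∈ Σ be the eigenvector whose eigenvalue λ₁ has smallest modulus, and set σ = min over w ∈ Σ∖{v} of the escape speeds σ_w; then σ > |λ₁|. Moreover, for any η with |λ₁| < η < σ and any x ∈ 𝔫: if there exist constants C, D such that φ(Lⁿ(x)) ≤ C·ηⁿ + D for all n ≥ 0, then x lies in the one-dimensional subspace spanned by v. -/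

import Mathlib

/-- The span of all brackets `⁅x, y⁆` with `x ∈ A`, `y ∈ B`. -/
def bracketSpan {𝔫 : Type*} [LieRing 𝔫] [LieAlgebra ℝ 𝔫] (A B : Submodule ℝ 𝔫) :
    Submodule ℝ 𝔫 :=
  Submodule.span ℝ {z : 𝔫 | ∃ x ∈ A, ∃ y ∈ B, z = ⁅x, y⁆}

/-- The lower central series of a subalgebra `A` (as a submodule of `𝔫`), 0-indexed:
`lcsOf A i` is the paper's `A^{i+1}`, so `lcsOf A 0 = A = A¹` and
`A^{i+1} = ⁅A, A^i⁆`. -/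
def lcsOf {𝔫 : Type*} [LieRing 𝔫] [LieAlgebra ℝ 𝔫] (A : Submodule ℝ 𝔫) :
    ℕ → Submodule ℝ 𝔫
  | 0 => A
  | (i + 1) => bracketSpan A (lcsOf A i)

/-- `v` is an eigenvector of `L` (with some real eigenvalue). -/
def IsEigvec {𝔫 : Type*} [LieRing 𝔫] [LieAlgebra ℝ 𝔫] (L : 𝔫 ≃ₗ⁅ℝ⁆ 𝔫) (v : 𝔫) : Prop :=
  v ≠ 0 ∧ ∃ c : ℝ, L v = c • v

/-- The `L`-grading of the subalgebra `A ⊆ 𝔫`: for `i ≥ 1` the `i`-th piece is the span of the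
eigenvectors of `L` lying in `A^i` but not in `A^{i+1}`; the (unused) `0`-th piece is `⊥`.
The paper's `𝔫_(i)` is `grading L ⊤ i`. -/
def grading {𝔫 : Type*} [LieRing 𝔫] [LieAlgebra ℝ 𝔫] (L : 𝔫 ≃ₗ⁅ℝ⁆ 𝔫) (A : Submodule ℝ 𝔫) :
    ℕ → Submodule ℝ 𝔫
  | 0 => ⊥
  | (i + 1) => Submodule.span ℝ
      {v : 𝔫 | IsEigvec L v ∧ v ∈ lcsOf A i ∧ v ∉ lcsOf A (i + 1)}

/-- `L` admits a basis of real eigenvectors. -/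
def HasRealEigenbasis {𝔫 : Type*} [LieRing 𝔫] [LieAlgebra ℝ 𝔫] (L : 𝔫 ≃ₗ⁅ℝ⁆ 𝔫) : Prop :=
  ∃ (n : ℕ) (b : Module.Basis (Fin n) ℝ 𝔫) (c : Fin n → ℝ), ∀ i, L (b i) = c i • b i


/-- `L` has sorted unstable spectrum: if `k < j` and `v ∈ 𝔫_(k)`, `w ∈ 𝔫_(j)` are unstable
eigenvectors with eigenvalues `cv`, `cw`, then `|cv| < |cw|`. -/
def SortedUnstableSpectrum {𝔫 : Type*} [LieRing 𝔫] [LieAlgebra ℝ 𝔫] (L : 𝔫 ≃ₗ⁅ℝ⁆ 𝔫) : Prop :=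
  ∀ (k j : ℕ), k < j → ∀ (v w : 𝔫) (cv cw : ℝ),
    v ≠ 0 → L v = cv • v → 1 < |cv| → v ∈ grading L ⊤ k →
    w ≠ 0 → L w = cw • w → 1 < |cw| → w ∈ grading L ⊤ j →
    |cv| < |cw|

/-- The Guivarc'h length `φ(x) = max_{1 ≤ k ≤ d} ‖x_k‖^{1/k}` associated to a norm `Nm` and a
family `P` of projections onto the graded pieces (`x_k = P k x`), where `d` bounds the
nilpotency degree. -/
noncomputable def guiLength {𝔫 : Type*} [LieRing 𝔫] [LieAlgebra ℝ 𝔫]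
    (Nm : 𝔫 → ℝ) (P : ℕ → 𝔫 →ₗ[ℝ] 𝔫) (d : ℕ) (hd : (Finset.Icc 1 d).Nonempty) (x : 𝔫) : ℝ :=
  (Finset.Icc 1 d).sup' hd fun k => Nm (P k x) ^ ((1 : ℝ) / k)

/-!
Brackets of `L`-eigenvectors are eigenvectors for the product of the eigenvalues, and with a
simple spectrum every eigenvector is a multiple of a basis vector. Hence for `j ≥ 2` the term
`𝔫^j` of the lower central series is spanned by basis vectors `w` with `|λ_w| > |λ₁|^j`, the
inequality being strict because `⁅v, v⁆ = 0`; for `w ≠ v` of degree `j` this is `σ_w > |λ₁|`.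

For the second claim, the `w`-coordinate of `x` only sees the graded piece `x_j`, is multiplied
by `λ_w` under `L`, and is bounded by a multiple of `‖(Lᵐx)_j‖ ≤ φ(Lᵐx)^j = O(η^{jm})`. Since
`η^j < |λ_w|`, it vanishes.
-/

open Submodule

namespace Module.Basis

section Eigenbasis

variable {ι R M F : Type*} [CommSemiring R] [AddCommMonoid M] [Module R M]
  [FunLike F M M] [LinearMapClass F R M M] (b : Basis ι R M) {c : ι → R} {f : F}

theorem repr_apply_of_eigen (hb : ∀ i, f (b i) = c i • b i) (y : M) (i : ι) :
    b.repr (f y) i = c i * b.repr y i := by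
  have : b.coord i ∘ₗ (f : M →ₗ[R] M) = c i • b.coord i := b.ext fun j => by
    rcases eq_or_ne j i with rfl | hji
    · simp [hb]
    · simp [hb, hji]
  exact LinearMap.congr_fun this y

theorem repr_iterate_apply_of_eigen (hb : ∀ i, f (b i) = c i • b i) (y : M) (i : ι) (m : ℕ) :
    b.repr ((⇑f)^[m] y) i = c i ^ m * b.repr y i := by
  induction m with
  | zero => simp
  | succ m ih =>
    rw [Function.iterate_succ_apply', b.repr_apply_of_eigen hb, ih]
    ring

theorem mem_span_singleton_of_repr_eq_zero {x : M} {i : ι} (h : ∀ j, j ≠ i → b.repr x j = 0) :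
    x ∈ span R {b i} := by
  rw [← Set.image_singleton, b.mem_span_image]
  intro j hj
  by_contra hji
  exact Finsupp.mem_support_iff.1 hj (h j hji)

end Eigenbasis

section SimpleSpectrum

variable {ι K V F : Type*} [Field K] [AddCommGroup V] [Module K V]
  [FunLike F V V] [LinearMapClass F K V V] (b : Basis ι K V) {c : ι → K} {f : F}

theorem mem_span_image_of_eigen (hb : ∀ i, f (b i) = c i • b i) {y : V} {μ : K}
    (hy : f y = μ • y) : y ∈ span K (b '' {l | c l = μ}) := by
  rw [b.mem_span_image]
  intro l hl
  have h := b.repr_apply_of_eigen hb y l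
  rw [hy, map_smul, Finsupp.smul_apply, smul_eq_mul] at h
  exact mul_right_cancel₀ (Finsupp.mem_support_iff.1 hl) h.symm

theorem exists_eq_smul_of_eigen (hc : Function.Injective c) (hb : ∀ i, f (b i) = c i • b i)
    {y : V} {μ : K} (hy0 : y ≠ 0) (hy : f y = μ • y) : ∃ l, ∃ t : K, t ≠ 0 ∧ y = t • b l := by
  obtain ⟨l, hl⟩ : ∃ l, b.repr y l ≠ 0 := by
    by_contra! h
    exact hy0 (b.repr.injective (Finsupp.ext fun l => by simp [h l]))
  have hspan := b.mem_span_image_of_eigen hb hy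
  have hμ : c l = μ := b.mem_span_image.1 hspan (Finsupp.mem_support_iff.2 hl)
  have hsingle : {l' | c l' = μ} = {l} :=
    Set.ext fun l' => ⟨fun h => hc (h.trans hμ.symm), fun h => h ▸ hμ⟩
  rw [hsingle, Set.image_singleton, mem_span_singleton] at hspan
  obtain ⟨t, rfl⟩ := hspan
  exact ⟨l, t, fun ht => hy0 (by simp [ht]), rfl⟩

end SimpleSpectrum

end Module.Basis

section LowerCentralSeries

variable {𝔫 : Type*} [LieRing 𝔫] [LieAlgebra ℝ 𝔫]

theorem bracketSpan_span_span (s t : Set 𝔫) :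
    bracketSpan (span ℝ s) (span ℝ t) = span ℝ (Set.image2 (⁅·, ·⁆) s t) := by
  have h := map₂_span_span ℝ (LieModule.toEnd ℝ 𝔫 𝔫 : 𝔫 →ₗ[ℝ] Module.End ℝ 𝔫) s t
  rw [map₂_eq_span_image2] at h
  simpa [bracketSpan, Set.image2, eq_comm] using h

theorem bracketSpan_mono_right (A : Submodule ℝ 𝔫) {B B' : Submodule ℝ 𝔫} (h : B ≤ B') :
    bracketSpan A B ≤ bracketSpan A B' :=
  span_mono fun _ ⟨x, hx, y, hy, e⟩ => ⟨x, hx, y, h hy, e⟩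

theorem lcsOf_top_antitone : Antitone (lcsOf (⊤ : Submodule ℝ 𝔫)) := by
  refine antitone_nat_of_succ_le fun m => ?_
  induction m with
  | zero => exact le_top
  | succ m ih => exact bracketSpan_mono_right ⊤ ih

theorem eq_of_mem_lcsOf_top_of_notMem {y : 𝔫} {k k' : ℕ}
    (hk : y ∈ lcsOf ⊤ k) (hk₁ : y ∉ lcsOf ⊤ (k + 1))
    (hk' : y ∈ lcsOf ⊤ k') (hk'₁ : y ∉ lcsOf ⊤ (k' + 1)) : k = k' := by
  by_contra h
  rcases Nat.lt_or_gt_of_ne h with h | h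
  · exact hk₁ (lcsOf_top_antitone h hk')
  · exact hk'₁ (lcsOf_top_antitone h hk)

theorem grading_succ_le_lcsOf (L : 𝔫 ≃ₗ⁅ℝ⁆ 𝔫) (A : Submodule ℝ 𝔫) (k : ℕ) :
    grading L A (k + 1) ≤ lcsOf A k :=
  span_le.2 fun _ hv => hv.2.1

theorem ne_zero_of_mem_grading {L : 𝔫 ≃ₗ⁅ℝ⁆ 𝔫} {A : Submodule ℝ 𝔫} {k : ℕ} {v : 𝔫}
    (hv : v ∈ grading L A k) (hv0 : v ≠ 0) : k ≠ 0 := by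
  rintro rfl
  exact hv0 ((mem_bot ℝ).1 hv)

end LowerCentralSeries

section LieEigenbasis

variable {𝔫 ι : Type*} [LieRing 𝔫] [LieAlgebra ℝ 𝔫] {L : 𝔫 ≃ₗ⁅ℝ⁆ 𝔫} {b : Module.Basis ι ℝ 𝔫}
  {c : ι → ℝ}

theorem lie_mem_span_eigen (hb : ∀ i, L (b i) = c i • b i) (i l : ι) :
    ⁅b i, b l⁆ ∈ span ℝ (b '' {l' | c l' = c i * c l}) :=
  b.mem_span_image_of_eigen hb (by rw [L.map_lie, hb, hb, smul_lie, lie_smul, smul_smul])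

theorem grading_succ_le_span (hc : Function.Injective c) (hb : ∀ i, L (b i) = c i • b i)
    (A : Submodule ℝ 𝔫) (k : ℕ) :
    grading L A (k + 1) ≤ span ℝ (b '' {l | b l ∈ lcsOf A k ∧ b l ∉ lcsOf A (k + 1)}) := by
  refine span_le.2 ?_
  rintro v ⟨⟨hv0, μ, hv⟩, hvk, hvk₁⟩
  obtain ⟨l, t, ht, rfl⟩ := b.exists_eq_smul_of_eigen hc hb hv0 hv
  exact smul_mem _ _ <| subset_span
    ⟨l, ⟨(smul_mem_iff _ ht).1 hvk, fun h => hvk₁ (smul_mem _ t h)⟩, rfl⟩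

theorem repr_eq_zero_of_mem_grading (hc : Function.Injective c)
    (hb : ∀ i, L (b i) = c i • b i) {y : 𝔫} {i : ι} {k j : ℕ} (hy : y ∈ grading L ⊤ k)
    (hi : b i ∈ grading L ⊤ j) (hkj : k ≠ j) : b.repr y i = 0 := by
  obtain _ | k := k
  · simp [(mem_bot ℝ).1 hy]
  obtain _ | j := j
  · exact absurd rfl (ne_zero_of_mem_grading hi (b.ne_zero i))
  have hij := b.self_mem_span_image.1 (grading_succ_le_span hc hb ⊤ j hi)
  by_contra hyi
  have hyk := b.mem_span_image.1 (grading_succ_le_span hc hb ⊤ k hy)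
    (Finsupp.mem_support_iff.2 hyi)
  exact hkj (congrArg (· + 1) (eq_of_mem_lcsOf_top_of_notMem hyk.1 hyk.2 hij.1 hij.2))

theorem lcsOf_top_succ_le_span (hc : Function.Injective fun i => |c i|)
    (hb : ∀ i, L (b i) = c i • b i) {i₀ : ι} (hmin : ∀ i, |c i₀| ≤ |c i|) (hpos : 0 < |c i₀|)
    (m : ℕ) :
    lcsOf (⊤ : Submodule ℝ 𝔫) (m + 1) ≤ span ℝ (b '' {l | |c i₀| ^ (m + 2) < |c l|}) := by
  have htop : (⊤ : Submodule ℝ 𝔫) = span ℝ (Set.range b) := b.span_eq.symm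
  induction m with
  | zero =>
    show bracketSpan ⊤ ⊤ ≤ _
    rw [htop, bracketSpan_span_span, span_le]
    rintro _ ⟨_, ⟨i, rfl⟩, _, ⟨l, rfl⟩, rfl⟩
    rcases eq_or_ne i l with rfl | hil
    · simp
    refine span_mono (Set.image_mono fun l' (hl' : c l' = _) => ?_) (lie_mem_span_eigen hb i l)
    have hlt : ∀ j, j ≠ i₀ → |c i₀| < |c j| := fun j hj =>
      (hmin j).lt_of_ne fun h => hj (hc h).symm
    rw [Set.mem_ofPred_eq, hl', abs_mul, sq]
    rcases eq_or_ne i i₀ with rfl | hi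
    · exact mul_lt_mul_of_pos_left (hlt l hil.symm) hpos
    · exact mul_lt_mul (hlt i hi) (hmin l) hpos (abs_nonneg _)
  | succ m ih =>
    refine (bracketSpan_mono_right ⊤ ih).trans ?_
    rw [htop, bracketSpan_span_span, span_le]
    rintro _ ⟨_, ⟨i, rfl⟩, _, ⟨l, hl, rfl⟩, rfl⟩
    refine span_mono (Set.image_mono fun l' (hl' : c l' = _) => ?_) (lie_mem_span_eigen hb i l)
    rw [Set.mem_ofPred_eq, hl', abs_mul, pow_succ']
    exact mul_lt_mul' (hmin i) hl (by positivity) (hpos.trans_le (hmin i))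

theorem pow_lt_abs_of_mem_grading (hc : Function.Injective fun i => |c i|)
    (hb : ∀ i, L (b i) = c i • b i) {i₀ : ι} (hmin : ∀ i, |c i₀| ≤ |c i|) (hpos : 0 < |c i₀|)
    {i : ι} {k : ℕ} (hi : b i ∈ grading L ⊤ k) (hi₀ : i ≠ i₀) : |c i₀| ^ k < |c i| := by
  obtain _ | _ | k := k
  · exact absurd rfl (ne_zero_of_mem_grading hi (b.ne_zero i))
  · simpa using (hmin i).lt_of_ne fun h => hi₀ (hc h).symm
  · exact b.self_mem_span_image.1
      (lcsOf_top_succ_le_span hc hb hmin hpos k (grading_succ_le_lcsOf L ⊤ (k + 1) hi))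

end LieEigenbasis

theorem Module.Basis.exists_abs_repr_le_mul {E ι : Type*} [AddCommGroup E] [Module ℝ E]
    [Finite ι] (b : Module.Basis ι ℝ E) (Nm : E → ℝ) (hNm_eq_zero : ∀ x, Nm x = 0 ↔ x = 0)
    (hNm_smul : ∀ (a : ℝ) (x : E), Nm (a • x) = |a| * Nm x)
    (hNm_add : ∀ x y : E, Nm (x + y) ≤ Nm x + Nm y) (i : ι) :
    ∃ K, 0 ≤ K ∧ ∀ y, |b.repr y i| ≤ K * Nm y := by
  let _ : NormedAddCommGroup E := AddGroupNorm.toNormedAddCommGroup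
    { toFun := Nm
      map_zero' := (hNm_eq_zero 0).2 rfl
      add_le' := hNm_add
      neg' := fun x => by simpa using hNm_smul (-1) x
      eq_zero_of_map_eq_zero' := fun x => (hNm_eq_zero x).1 }
  let _ : NormedSpace ℝ E := ⟨fun a x => (hNm_smul a x).le⟩
  have := b.finiteDimensional_of_finite
  let g := LinearMap.toContinuousLinearMap (b.coord i)
  exact ⟨‖g‖, norm_nonneg g, g.le_opNorm⟩

section GuivarchLength

variable {𝔫 : Type*} [LieRing 𝔫] [LieAlgebra ℝ 𝔫] {Nm : 𝔫 → ℝ} {P : ℕ → 𝔫 →ₗ[ℝ] 𝔫} {d : ℕ}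
  {hd : (Finset.Icc 1 d).Nonempty}

theorem guiLength_nonneg (hNm_nonneg : ∀ x, 0 ≤ Nm x) (y : 𝔫) : 0 ≤ guiLength Nm P d hd y := by
  obtain ⟨k, hk⟩ := hd
  exact (Real.rpow_nonneg (hNm_nonneg _) _).trans
    (Finset.le_sup' (fun k => Nm (P k y) ^ ((1 : ℝ) / k)) hk)

theorem norm_proj_le_guiLength_pow (hNm_nonneg : ∀ x, 0 ≤ Nm x) {j : ℕ}
    (hj : j ∈ Finset.Icc 1 d) (y : 𝔫) : Nm (P j y) ≤ guiLength Nm P d hd y ^ j := by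
  have hj0 : j ≠ 0 := by have := (Finset.mem_Icc.1 hj).1; omega
  calc Nm (P j y) = (Nm (P j y) ^ ((1 : ℝ) / j)) ^ j := by
        rw [one_div, Real.rpow_inv_natCast_pow (hNm_nonneg _) hj0]
    _ ≤ guiLength Nm P d hd y ^ j := pow_le_pow_left₀ (Real.rpow_nonneg (hNm_nonneg _) _)
        (Finset.le_sup' (fun k => Nm (P k y) ^ ((1 : ℝ) / k)) hj) j

end GuivarchLength

theorem lt_rpow_one_div_iff {x y : ℝ} {k : ℕ} (hx : 0 ≤ x) (hy : 0 ≤ y) (hk : k ≠ 0) :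
    x < y ^ ((1 : ℝ) / k) ↔ x ^ k < y := by
  rw [one_div, Real.lt_rpow_inv_iff_of_pos hx hy (by positivity), Real.rpow_natCast]

theorem mul_pow_add_le {C D η : ℝ} (hη : 1 ≤ η) (m : ℕ) :
    C * η ^ m + D ≤ (|C| + |D|) * η ^ m := by
  have hηm : 1 ≤ η ^ m := one_le_pow₀ hη
  calc C * η ^ m + D ≤ |C| * η ^ m + |D| * η ^ m :=
        add_le_add (mul_le_mul_of_nonneg_right (le_abs_self C) (by positivity))
          ((le_abs_self D).trans (le_mul_of_one_le_right (abs_nonneg D) hηm))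
    _ = (|C| + |D|) * η ^ m := by ring

theorem eq_zero_of_abs_mul_pow_le {a M r s : ℝ} (hr : 0 < r) (hrs : r < s)
    (h : ∀ m : ℕ, |a| * s ^ m ≤ M * r ^ m) : a = 0 := by
  by_contra ha
  obtain ⟨m, hm⟩ := pow_unbounded_of_one_lt (M / |a|) ((one_lt_div hr).2 hrs)
  rw [div_pow, div_lt_div_iff₀ (abs_pos.2 ha) (pow_pos hr m)] at hm
  linarith [h m, mul_comm (s ^ m) |a|]

section Growth

variable {𝔫 ι : Type*} [LieRing 𝔫] [LieAlgebra ℝ 𝔫] {L : 𝔫 ≃ₗ⁅ℝ⁆ 𝔫}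
  {b : Module.Basis ι ℝ 𝔫} {c : ι → ℝ} {P : ℕ → 𝔫 →ₗ[ℝ] 𝔫} {d : ℕ}

theorem repr_proj_eq_of_mem_grading (hc : Function.Injective c) (hb : ∀ i, L (b i) = c i • b i)
    (hP_mem : ∀ (k : ℕ) (x : 𝔫), P k x ∈ grading L ⊤ k)
    (hP_sum : ∀ x : 𝔫, x = ∑ k ∈ Finset.Icc 1 d, P k x) {i : ι} {k : ℕ}
    (hi : b i ∈ grading L ⊤ k) : k ∈ Finset.Icc 1 d ∧ ∀ y, b.repr (P k y) i = b.repr y i := by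
  classical
  have hsum : ∀ y, b.repr y i = if k ∈ Finset.Icc 1 d then b.repr (P k y) i else 0 := by
    intro y
    calc b.repr y i = ∑ k' ∈ Finset.Icc 1 d, b.repr (P k' y) i := by
          conv_lhs => rw [hP_sum y]
          simp only [map_sum, Finsupp.finsetSum_apply]
      _ = ∑ k' ∈ Finset.Icc 1 d, if k' = k then b.repr (P k' y) i else 0 := by
          refine Finset.sum_congr rfl fun k' _ => ?_
          split_ifs with hk'
          · rfl
          · exact repr_eq_zero_of_mem_grading hc hb (hP_mem k' y) hi hk'
      _ = _ := Finset.sum_ite_eq' _ _ _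
  have hk : k ∈ Finset.Icc 1 d := by
    by_contra hk
    simpa [hk] using hsum (b i)
  exact ⟨hk, fun y => by rw [hsum y, if_pos hk]⟩

theorem repr_eq_zero_of_guiLength_le [Finite ι] (hc : Function.Injective c)
    (hb : ∀ i, L (b i) = c i • b i) {Nm : 𝔫 → ℝ} (hNm_nonneg : ∀ x, 0 ≤ Nm x)
    (hNm_eq_zero : ∀ x, Nm x = 0 ↔ x = 0) (hNm_smul : ∀ (a : ℝ) (x : 𝔫), Nm (a • x) = |a| * Nm x)
    (hNm_add : ∀ x y : 𝔫, Nm (x + y) ≤ Nm x + Nm y) {hd : (Finset.Icc 1 d).Nonempty}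
    (hP_mem : ∀ (k : ℕ) (x : 𝔫), P k x ∈ grading L ⊤ k)
    (hP_sum : ∀ x : 𝔫, x = ∑ k ∈ Finset.Icc 1 d, P k x) {i : ι} {k : ℕ}
    (hi : b i ∈ grading L ⊤ k) {η B : ℝ} (hη : 0 < η) (hηc : η ^ k < |c i|) {x : 𝔫}
    (hx : ∀ m : ℕ, guiLength Nm P d hd ((⇑L)^[m] x) ≤ B * η ^ m) : b.repr x i = 0 := by
  obtain ⟨hk, hproj⟩ := repr_proj_eq_of_mem_grading hc hb hP_mem hP_sum hi
  obtain ⟨K, hK0, hK⟩ := b.exists_abs_repr_le_mul Nm hNm_eq_zero hNm_smul hNm_add i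
  refine eq_zero_of_abs_mul_pow_le (M := K * B ^ k) (pow_pos hη k) hηc fun m => ?_
  calc |b.repr x i| * |c i| ^ m = |b.repr (P k ((⇑L)^[m] x)) i| := by
        rw [hproj, b.repr_iterate_apply_of_eigen hb, abs_mul, abs_pow, mul_comm]
    _ ≤ K * Nm (P k ((⇑L)^[m] x)) := hK _
    _ ≤ K * guiLength Nm P d hd ((⇑L)^[m] x) ^ k :=
        mul_le_mul_of_nonneg_left (norm_proj_le_guiLength_pow hNm_nonneg hk _) hK0
    _ ≤ K * (B * η ^ m) ^ k := by gcongr; exacts [guiLength_nonneg hNm_nonneg _, hx m]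
    _ = K * B ^ k * (η ^ k) ^ m := by ring

end Growth

theorem guivarch_growth_characterizes_slow_direction_general
    {𝔫 : Type*} [LieRing 𝔫] [LieAlgebra ℝ 𝔫]
    (L : 𝔫 ≃ₗ⁅ℝ⁆ 𝔫)
    (n : ℕ) (b : Module.Basis (Fin n) ℝ 𝔫) (c : Fin n → ℝ)
    (hb : ∀ i, L (b i) = c i • b i)
    (hexp : ∀ (u : 𝔫) (cu : ℝ), u ≠ 0 → L u = cu • u → 1 < |cu|)
    (hsimple : Function.Injective fun i => |c i|)
    -- a norm on 𝔫
    (Nm : 𝔫 → ℝ)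
    (hNm_nonneg : ∀ x, 0 ≤ Nm x) (hNm_eq_zero : ∀ x, Nm x = 0 ↔ x = 0)
    (hNm_smul : ∀ (a : ℝ) (x : 𝔫), Nm (a • x) = |a| * Nm x)
    (hNm_add : ∀ x y : 𝔫, Nm (x + y) ≤ Nm x + Nm y)
    -- the decomposition 𝔫 = ⨁_{1 ≤ k ≤ d} 𝔫_(k) with projections P k
    (d : ℕ) (hd : (Finset.Icc 1 d).Nonempty)
    (P : ℕ → 𝔫 →ₗ[ℝ] 𝔫)
    (hP_mem : ∀ (k : ℕ) (x : 𝔫), P k x ∈ grading L ⊤ k)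
    (hP_sum : ∀ x : 𝔫, x = ∑ k ∈ Finset.Icc 1 d, P k x)
    -- the eigenbasis vectors and their grading degrees
    (deg : Fin n → ℕ) (hdeg : ∀ i, b i ∈ grading L ⊤ (deg i))
    -- the slowest eigenvector v = b i₀
    (i₀ : Fin n) (hmin : ∀ i, |c i₀| ≤ |c i|) :
    (∀ i : Fin n, i ≠ i₀ → |c i₀| < |c i| ^ ((1 : ℝ) / (deg i))) ∧
    (∀ η : ℝ, |c i₀| < η → (∀ i : Fin n, i ≠ i₀ → η < |c i| ^ ((1 : ℝ) / (deg i))) →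
      ∀ (x : 𝔫) (C D : ℝ),
        (∀ m : ℕ, guiLength Nm P d hd ((⇑L)^[m] x) ≤ C * η ^ m + D) →
        x ∈ Submodule.span ℝ {b i₀}) := by
  have hc : Function.Injective c := Function.Injective.of_comp (f := abs) hsimple
  have hc₀ : 1 < |c i₀| := hexp _ _ (b.ne_zero i₀) (hb i₀)
  have hdeg₀ : ∀ i, deg i ≠ 0 := fun i => ne_zero_of_mem_grading (hdeg i) (b.ne_zero i)
  refine ⟨fun i hi => ?_, fun η hη hησ x C D hx => ?_⟩
  · rw [lt_rpow_one_div_iff (abs_nonneg _) (abs_nonneg _) (hdeg₀ i)]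
    exact pow_lt_abs_of_mem_grading hsimple hb hmin (zero_lt_one.trans hc₀) (hdeg i) hi
  · refine b.mem_span_singleton_of_repr_eq_zero fun i hi => ?_
    have hη₁ : 1 < η := hc₀.trans hη
    have hηi := hησ i hi
    rw [lt_rpow_one_div_iff (by linarith) (abs_nonneg _) (hdeg₀ i)] at hηi
    exact repr_eq_zero_of_guiLength_le hc hb hNm_nonneg hNm_eq_zero hNm_smul hNm_add hP_mem
      hP_sum (hdeg i) (by linarith) hηi fun m => (hx m).trans (mul_pow_add_le hη₁.le m)

/-- let `L` be an expanding automorphism with simple sorted spectrum of a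
finite-dimensional real nilpotent Lie algebra, with real eigenbasis `b` and eigenvalues `c`.
Fix a norm `Nm` on `𝔫` and let `φ = guiLength Nm P d hd` be the associated Guivarc'h length,
where `P k` is the projection onto the graded piece `𝔫_(k)` coming from the direct sum
decomposition `𝔫 = ⨁_{1 ≤ k ≤ d} 𝔫_(k)` and `deg i` is the grading degree of `b i`.
Let `v = b i₀` be the eigenvector of smallest eigenvalue modulus `|λ₁| = |c i₀|`, and let
`σ = min_{w ∈ Σ \ {v}} σ_w` be the second-slowest escape speed. Then `σ > |λ₁|` (first
conjunct), and for any `η` with `|λ₁| < η < σ` and any `x`: if `φ(Lⁿ x) ≤ C·ηⁿ + D` for all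
`n ≥ 0`, then `x` lies in the one-dimensional subspace spanned by `v`. -/
theorem guivarch_growth_characterizes_slow_direction
    {𝔫 : Type*} [LieRing 𝔫] [LieAlgebra ℝ 𝔫] [FiniteDimensional ℝ 𝔫]
    [LieRing.IsNilpotent 𝔫]
    (L : 𝔫 ≃ₗ⁅ℝ⁆ 𝔫)
    (n : ℕ) (b : Module.Basis (Fin n) ℝ 𝔫) (c : Fin n → ℝ)
    (hb : ∀ i, L (b i) = c i • b i)
    (hexp : ∀ (u : 𝔫) (cu : ℝ), u ≠ 0 → L u = cu • u → 1 < |cu|)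
    (hsimple : Function.Injective fun i => |c i|)
    (hsorted : SortedUnstableSpectrum L)
    -- a norm on 𝔫
    (Nm : 𝔫 → ℝ)
    (hNm_nonneg : ∀ x, 0 ≤ Nm x) (hNm_eq_zero : ∀ x, Nm x = 0 ↔ x = 0)
    (hNm_smul : ∀ (a : ℝ) (x : 𝔫), Nm (a • x) = |a| * Nm x)
    (hNm_add : ∀ x y : 𝔫, Nm (x + y) ≤ Nm x + Nm y)
    -- the decomposition 𝔫 = ⨁_{1 ≤ k ≤ d} 𝔫_(k) with projections P k
    (d : ℕ) (hd : (Finset.Icc 1 d).Nonempty)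
    (P : ℕ → 𝔫 →ₗ[ℝ] 𝔫)
    (hP_mem : ∀ (k : ℕ) (x : 𝔫), P k x ∈ grading L ⊤ k)
    (hP_sum : ∀ x : 𝔫, x = ∑ k ∈ Finset.Icc 1 d, P k x)
    (hP_proj : ∀ (k : ℕ), k ∈ Finset.Icc 1 d → ∀ x ∈ grading L ⊤ k, P k x = x)
    -- the eigenbasis vectors and their grading degrees
    (deg : Fin n → ℕ) (hdeg₁ : ∀ i, 1 ≤ deg i) (hdeg : ∀ i, b i ∈ grading L ⊤ (deg i))
    -- the slowest eigenvector v = b i₀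
    (i₀ : Fin n) (hmin : ∀ i, |c i₀| ≤ |c i|) :
    (∀ i : Fin n, i ≠ i₀ → |c i₀| < |c i| ^ ((1 : ℝ) / (deg i))) ∧
    (∀ η : ℝ, |c i₀| < η → (∀ i : Fin n, i ≠ i₀ → η < |c i| ^ ((1 : ℝ) / (deg i))) →
      ∀ (x : 𝔫) (C D : ℝ),
        (∀ m : ℕ, guiLength Nm P d hd ((⇑L)^[m] x) ≤ C * η ^ m + D) →
        x ∈ Submodule.span ℝ {b i₀}) :=
  guivarch_growth_characterizes_slow_direction_general L n b c hb hexp hsimple Nm hNm_nonneg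
    hNm_eq_zero hNm_smul hNm_add d hd P hP_mem hP_sum deg hdeg i₀ hmin
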